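/- Sharpness of the bounds in Theorem 2: Suppose the observed conditional laws p_z(x, y) = P(X = x, Y = y | Z = z), z ∈ {1,…,K}, arise from some model satisfying assumption (i) with instrument law π (π(z) > 0 for all z). Then for each i, j ∈ {0,1} there exists another model on some probability space — random variables Z, X(z_1),…,X(z_K), Y(x_0), Y(x_1) satisfying assumption (i), with Z having law π and with P(X = x, Y = y | Z = z) = p_z(x, y) for all x, y, z — in which P(Y(x_i) = j) = g(i, j). -/

import Mathlib

/-!
Under assumption (i), conditioning on `Z = z` turns the observed cell `(X, Y) = (x, y)` into the
potential cell `X(z) = x, Y(x) = y`, so every pointwise inequality between indicators of potential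
cells and of `{Y(xᵢ) = j}` integrates to a linear inequality between the `p z x y`. Among these
are `P(Y(xᵢ) = j) ≤ g(i, j)` (Theorem 2) and the instrumental inequalities of the observed law.

For sharpness, write `a, b, c, d` for the observed probabilities of the cells `(i, j)`,
`(i, 1-j)`, `(1-i, 1)`, `(1-i, 0)` and let all responses be functions of one uniform
`u ∈ [0, 1)`: `Y(xᵢ) = j` exactly on `[0, g)`, `Y(x_{1-i}) = 1` exactly on some `[s, e)`, and
`X(z) = i` exactly on `[q_z - a_z, q_z) ∪ [q_z + c_z, q_z + c_z + b_z)`. Along the chain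
`0 ≤ q_z - a_z ≤ s ≤ q_z ≤ g ≤ q_z + c_z ≤ e ≤ q_z + c_z + b_z ≤ 1` the cells `(i, j)`,
`(1-i, 1)`, `(i, 1-j)` at `z` are the consecutive intervals starting at `q_z - a_z`, and the cell
`(1-i, 0)` is the rest of `[0, 1)`. The instrumental inequalities are what is needed to choose
`s`, `e` and the `q_z`; an independent copy of `Z` completes the model.
-/

open MeasureTheory ProbabilityTheory Set

/-- The bound `g(i, j)` of Theorem 2, expressed in terms of conditional laws
`p z x y` (interpreted as `P(X = x, Y = y | Z = z)`):
`g(i,j) = min{ min_z [ p_z(X=i,Y=j) + p_z(X=1−i) ],`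
`min_{z ≠ z̃} [ p_z(X=i,Y=j) + p_z(X=1−i,Y=0) + p_{z̃}(X=i,Y=j) + p_{z̃}(X=1−i,Y=1) ] }`,
where `p_z(X = 1−i) = p_z(X=1−i, Y=0) + p_z(X=1−i, Y=1)`. -/
noncomputable def gOf {K : ℕ} (hK : 2 ≤ K) (p : Fin K → Fin 2 → Fin 2 → ℝ)
    (i j : Fin 2) : ℝ :=
  min
    ((Finset.univ : Finset (Fin K)).inf'
      ⟨⟨0, by omega⟩, Finset.mem_univ _⟩
      (fun z => p z i j + (p z (1 - i) 0 + p z (1 - i) 1)))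
    (((Finset.univ : Finset (Fin K × Fin K)).filter (fun q => q.1 ≠ q.2)).inf'
      ⟨(⟨0, by omega⟩, ⟨1, by omega⟩), by
        simp only [Finset.mem_filter, Finset.mem_univ, true_and]
        exact fun h => absurd (congrArg Fin.val h) (by simp)⟩
      (fun q => p q.1 i j + p q.1 (1 - i) 0 + p q.2 i j + p q.2 (1 - i) 1))

/-- A binary instrumental-variable model with instrument law `π` and observed conditional
laws `p z x y = P(X = x, Y = y | Z = z)`, satisfying assumption (i): joint independence of
`Z` from `(Y(x₀), Y(x₁), X(z₁), …, X(z_K))`.  The observed treatment is `X = X(Z)` and the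
observed outcome is `Y = Y(X)`. -/
structure IVModel (K : ℕ) (π : Fin K → ℝ) (p : Fin K → Fin 2 → Fin 2 → ℝ) where
  (Ω : Type)
  [m : MeasurableSpace Ω]
  (P : Measure Ω)
  prob : IsProbabilityMeasure P
  Z : Ω → Fin K
  Xz : Fin K → Ω → Fin 2
  Y0 : Ω → Fin 2
  Y1 : Ω → Fin 2
  hZ : Measurable Z
  hXz : ∀ z, Measurable (Xz z)
  hY0 : Measurable Y0
  hY1 : Measurable Y1
  indep : IndepFun Z (fun ω => (Y0 ω, Y1 ω, fun z => Xz z ω)) P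
  law_Z : ∀ z, (P (Z ⁻¹' {z})).toReal = π z
  law_cond : ∀ (z : Fin K) (x y : Fin 2),
    (P[|Z ⁻¹' {z}] {ω | Xz (Z ω) ω = x ∧
      (if Xz (Z ω) ω = 0 then Y0 ω else Y1 ω) = y}).toReal = p z x y


attribute [local instance] IVModel.m IVModel.prob

theorem Fin.ite_zero_apply {α β : Type*} (f : Fin 2 → α → β) (x : Fin 2) (a : α) :
    (if x = 0 then f 0 a else f 1 a) = f x a := by
  fin_cases x <;> rfl

theorem Fin.one_sub_ne_self (i : Fin 2) : 1 - i ≠ i := by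
  revert i; decide

theorem Fin.eq_or_eq_one_sub (x i : Fin 2) : x = i ∨ x = 1 - i := by
  revert x i; decide

section Indicator

variable {Ω ι κ : Type*} [MeasurableSpace Ω] {μ : Measure Ω} [Fintype ι] [Fintype κ]
  {A : ι → Set Ω} {B : κ → Set Ω}

theorem integrable_sum_indicator_one [IsFiniteMeasure μ] (hA : ∀ k, MeasurableSet (A k)) :
    Integrable (fun ω => ∑ k, (A k).indicator (1 : Ω → ℝ) ω) μ :=
  integrable_finsetSum _ fun k _ => (integrable_const 1).indicator (hA k)

theorem integral_sum_indicator_one [IsFiniteMeasure μ] (hA : ∀ k, MeasurableSet (A k)) :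
    ∫ ω, ∑ k, (A k).indicator 1 ω ∂μ = ∑ k, μ.real (A k) := by
  rw [integral_finsetSum _ fun k _ => (integrable_const 1).indicator (hA k)]
  simp only [integral_indicator_one (hA _)]

theorem sum_measureReal_le_of_indicator [IsProbabilityMeasure μ] (hA : ∀ k, MeasurableSet (A k))
    (hB : ∀ l, MeasurableSet (B l)) {C : ℝ}
    (h : ∀ ω, ∑ k, (A k).indicator 1 ω ≤ ∑ l, (B l).indicator 1 ω + C) :
    ∑ k, μ.real (A k) ≤ ∑ l, μ.real (B l) + C :=
  calc ∑ k, μ.real (A k) = ∫ ω, ∑ k, (A k).indicator 1 ω ∂μ :=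
        (integral_sum_indicator_one hA).symm
    _ ≤ ∫ ω, (∑ l, (B l).indicator 1 ω + C) ∂μ :=
        integral_mono (integrable_sum_indicator_one hA)
          ((integrable_sum_indicator_one hB).add (integrable_const C)) h
    _ = ∑ l, μ.real (B l) + C := by
        rw [integral_add (integrable_sum_indicator_one hB) (integrable_const C),
          integral_sum_indicator_one hB]
        simp

theorem sum_measureReal_eq_one_of_indicator [IsProbabilityMeasure μ]
    (hA : ∀ k, MeasurableSet (A k)) (h : ∀ ω, ∑ k, (A k).indicator (1 : Ω → ℝ) ω = 1) :
    ∑ k, μ.real (A k) = 1 := by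
  rw [← integral_sum_indicator_one hA, integral_congr_ae (ae_of_all μ h)]
  simp

end Indicator

theorem cond_observed_eq {Ω : Type*} [MeasurableSpace Ω] {P : Measure Ω} [IsFiniteMeasure P]
    {K : ℕ} {Z : Ω → Fin K} {Xz : Fin K → Ω → Fin 2} {Y0 Y1 : Ω → Fin 2}
    (hind : IndepFun Z (fun ω => (Y0 ω, Y1 ω, fun z => Xz z ω)) P) (hZ : Measurable Z)
    {z : Fin K} (hz : P (Z ⁻¹' {z}) ≠ 0) (x y : Fin 2) :
    P[|Z ⁻¹' {z}] {ω | Xz (Z ω) ω = x ∧ (if Xz (Z ω) ω = 0 then Y0 ω else Y1 ω) = y} =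
      P {ω | Xz z ω = x ∧ (if x = 0 then Y0 ω else Y1 ω) = y} := by
  set S : Set (Fin 2 × Fin 2 × (Fin K → Fin 2)) :=
    {r | r.2.2 z = x ∧ (if x = 0 then r.1 else r.2.1) = y}
  have hS : MeasurableSet S := (Set.toFinite S).measurableSet
  have hcap : Z ⁻¹' {z} ∩ {ω | Xz (Z ω) ω = x ∧ (if Xz (Z ω) ω = 0 then Y0 ω else Y1 ω) = y} =
      Z ⁻¹' {z} ∩ (fun ω => (Y0 ω, Y1 ω, fun z => Xz z ω)) ⁻¹' S := by
    ext ω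
    simp only [mem_inter_iff, mem_preimage, mem_singleton_iff, mem_ofPred_eq, S]
    constructor <;> rintro ⟨rfl, rfl, h⟩ <;> exact ⟨rfl, rfl, h⟩
  rw [cond_apply (hZ (measurableSet_singleton z)), hcap,
    hind.measure_inter_preimage_eq_mul _ _ (measurableSet_singleton z) hS,
    ENNReal.inv_mul_cancel_left hz (measure_ne_top _ _)]
  rfl

theorem exists_mem_Icc_sub_mem_Icc {s₀ s₁ e₀ e₁ d₀ d₁ : ℝ} (hs : s₀ ≤ s₁) (he : e₀ ≤ e₁)
    (hd : d₀ ≤ d₁) (he₀s₁ : e₀ - s₁ ≤ d₁) (hd₀ : d₀ ≤ e₁ - s₀) :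
    ∃ s ∈ Icc s₀ s₁, ∃ e ∈ Icc e₀ e₁, e - s ∈ Icc d₀ d₁ := by
  set s := min s₁ (e₁ - d₀)
  have hs₀ : s₀ ≤ s := le_min hs (by linarith)
  have hes : e₀ - d₁ ≤ s := le_min (by linarith) (by linarith)
  have hse : s ≤ e₁ - d₀ := min_le_right _ _
  refine ⟨s, ⟨hs₀, min_le_left _ _⟩, max e₀ (s + d₀), ⟨le_max_left _ _, max_le he (by linarith)⟩,
    by linarith [le_max_right e₀ (s + d₀)], ?_⟩
  exact sub_le_iff_le_add.2 (max_le (by linarith) (by linarith))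

theorem exists_forall_mem_Icc_sub_mem_Icc {ι : Type*} [Finite ι] [Nonempty ι]
    (s₀ s₁ e₀ e₁ d₀ d₁ : ι → ℝ) (hs : ∀ z w, s₀ z ≤ s₁ w) (he : ∀ z w, e₀ z ≤ e₁ w)
    (hd : ∀ z w, d₀ z ≤ d₁ w) (he₀s₁ : ∀ z w v, e₀ z - s₁ w ≤ d₁ v)
    (hd₀ : ∀ z w v, d₀ z ≤ e₁ w - s₀ v) :
    ∃ s e : ℝ, ∀ z, s ∈ Icc (s₀ z) (s₁ z) ∧ e ∈ Icc (e₀ z) (e₁ z) ∧ e - s ∈ Icc (d₀ z) (d₁ z) := by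
  obtain ⟨z₁, hz₁⟩ := Finite.exists_max s₀
  obtain ⟨z₂, hz₂⟩ := Finite.exists_min s₁
  obtain ⟨z₃, hz₃⟩ := Finite.exists_max e₀
  obtain ⟨z₄, hz₄⟩ := Finite.exists_min e₁
  obtain ⟨z₅, hz₅⟩ := Finite.exists_max d₀
  obtain ⟨z₆, hz₆⟩ := Finite.exists_min d₁
  obtain ⟨s, hs, e, he, hse⟩ := exists_mem_Icc_sub_mem_Icc (hs z₁ z₂) (he z₃ z₄) (hd z₅ z₆)
    (he₀s₁ z₃ z₂ z₆) (hd₀ z₅ z₄ z₁)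
  exact ⟨s, e, fun z => ⟨⟨(hz₁ z).trans hs.1, hs.2.trans (hz₂ z)⟩,
    ⟨(hz₃ z).trans he.1, he.2.trans (hz₄ z)⟩, ⟨(hz₅ z).trans hse.1, hse.2.trans (hz₆ z)⟩⟩⟩

def IsLayout (a b c g s e q : ℝ) : Prop :=
  0 ≤ q - a ∧ q - a ≤ s ∧ s ≤ q ∧ q ≤ g ∧ g ≤ q + c ∧ q + c ≤ e ∧ e ≤ q + c + b ∧ q + c + b ≤ 1

theorem isLayout_of_mem_Icc {a b c d g s e : ℝ} (ha : 0 ≤ a) (hb : 0 ≤ b) (hc : 0 ≤ c)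
    (hd : 0 ≤ d) (hsum : a + b + c + d = 1) (hg : g ≤ a + c + d) (hag : a ≤ g)
    (hs : s ∈ Icc (max 0 (g - a - c)) (min g (1 - b - c)))
    (he : e ∈ Icc (max g (a + c)) (min 1 (g + b + c))) (hes : e - s ∈ Icc c (1 - d)) :
    IsLayout a b c g s e (max (max a s) (max (g - c) (e - b - c))) := by
  obtain ⟨⟨hs₀, hs₀'⟩, hs₁, hs₁'⟩ : (0 ≤ s ∧ g - a - c ≤ s) ∧ s ≤ g ∧ s ≤ 1 - b - c := by
    simpa only [mem_Icc, max_le_iff, le_min_iff] using hs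
  obtain ⟨⟨he₀, he₀'⟩, he₁, he₁'⟩ : (g ≤ e ∧ a + c ≤ e) ∧ e ≤ 1 ∧ e ≤ g + b + c := by
    simpa only [mem_Icc, max_le_iff, le_min_iff] using he
  obtain ⟨hes₀, hes₁⟩ := hes
  set q := max (max a s) (max (g - c) (e - b - c))
  have hq₁ : a ≤ q := le_max_of_le_left (le_max_left _ _)
  have hq₂ : s ≤ q := le_max_of_le_left (le_max_right _ _)
  have hq₃ : g - c ≤ q := le_max_of_le_right (le_max_left _ _)
  have hq₄ : e - b - c ≤ q := le_max_of_le_right (le_max_right _ _)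
  have hq : ∀ r, a ≤ r → s ≤ r → g - c ≤ r → e - b - c ≤ r → q ≤ r :=
    fun r h₁ h₂ h₃ h₄ => max_le (max_le h₁ h₂) (max_le h₃ h₄)
  refine ⟨by linarith, ?_, hq₂, hq g hag hs₁ (by linarith) (by linarith), by linarith, ?_,
    by linarith, ?_⟩
  · linarith [hq (s + a) (by linarith) (by linarith) (by linarith) (by linarith)]
  · linarith [hq (e - c) (by linarith) (by linarith) (by linarith) (by linarith)]
  · linarith [hq (1 - b - c) (by linarith) (by linarith) (by linarith) (by linarith)]

theorem exists_isLayout_of_bounds {ι : Type*} [Finite ι] [Nonempty ι] {a b c d : ι → ℝ} {g : ℝ}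
    (ha : ∀ z, 0 ≤ a z) (hb : ∀ z, 0 ≤ b z) (hc : ∀ z, 0 ≤ c z) (hd : ∀ z, 0 ≤ d z)
    (hsum : ∀ z, a z + b z + c z + d z = 1) (hg : ∀ z, g ≤ a z + c z + d z)
    (hg₂ : ∀ z w, g ≤ a z + d z + a w + c w) (hag : ∀ z, a z ≤ g)
    (hacg : ∀ z w, a z + c z ≤ g + b w + c w) (hcd : ∀ z w, c z + d w ≤ 1)
    (hfive : ∀ z w v, b z + c z + a w + c w + d v ≤ 2)
    (hcover : ∀ z w v, c z ≤ a w + c w + b v + c v) :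
    ∃ s e : ℝ, ∃ q : ι → ℝ, ∀ z, IsLayout (a z) (b z) (c z) g s e (q z) := by
  obtain ⟨s, e, hse⟩ := exists_forall_mem_Icc_sub_mem_Icc
    (fun z => max 0 (g - a z - c z)) (fun z => min g (1 - b z - c z))
    (fun z => max g (a z + c z)) (fun z => min 1 (g + b z + c z)) c (fun z => 1 - d z)
    (fun z w => max_le (le_min (by linarith [ha z, hag z]) (by linarith [ha w, hd w, hsum w]))
      (le_min (by linarith [ha z, hc z]) (by linarith [hg₂ w z, hsum w])))
    (fun z w => max_le (le_min (by linarith [hg z, hsum z, hb z]) (by linarith [hb w, hc w]))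
      (le_min (by linarith [hsum z, hb z, hd z]) (hacg z w)))
    (fun z w => by linarith [hcd z w])
    (fun z w v => by
      rw [sub_le_iff_le_add, ← min_add_add_left]
      exact max_le
        (le_min (by linarith [hsum v, ha v, hb v, hc v]) (by linarith [hg w, hsum w, hcd w v]))
        (le_min (by linarith [hacg z v, hsum v, ha v]) (by linarith [hfive w z v, hsum w])))
    (fun z w v => by
      rw [le_sub_iff_add_le, ← max_add_add_left]
      exact max_le
        (le_min (by linarith [hcd z w, hd w]) (by linarith [hacg z w, ha z]))
        (le_min (by linarith [hg v, hcd z v]) (by linarith [hcover z v w])))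
  exact ⟨s, e, _, fun z => isLayout_of_mem_Icc (ha z) (hb z) (hc z) (hd z) (hsum z) (hg z) (hag z)
    (hse z).1 (hse z).2.1 (hse z).2.2⟩

theorem le_gOf_iff {K : ℕ} (hK : 2 ≤ K) (p : Fin K → Fin 2 → Fin 2 → ℝ) (i j : Fin 2) {x : ℝ} :
    x ≤ gOf hK p i j ↔ (∀ z, x ≤ p z i j + (p z (1 - i) 0 + p z (1 - i) 1)) ∧
      ∀ z w, z ≠ w → x ≤ p z i j + p z (1 - i) 0 + p w i j + p w (1 - i) 1 := by
  refine ⟨fun h => ⟨fun z => h.trans ((min_le_left _ _).trans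
      (Finset.inf'_le _ (Finset.mem_univ z))),
    fun z w hzw => h.trans ((min_le_right _ _).trans (Finset.inf'_le _ (b := (z, w)) (by simpa)))⟩,
    fun ⟨h₁, h₂⟩ => le_min (Finset.le_inf' _ _ fun z _ => h₁ z)
      (Finset.le_inf' _ _ fun q hq => h₂ q.1 q.2 (by simpa using hq))⟩

namespace IVModel

variable {K : ℕ} {π : Fin K → ℝ} {p : Fin K → Fin 2 → Fin 2 → ℝ}

section Cells

variable (M : IVModel K π p)

def Y (x : Fin 2) (ω : M.Ω) : Fin 2 := if x = 0 then M.Y0 ω else M.Y1 ω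

def cell (z : Fin K) (x y : Fin 2) : Set M.Ω := {ω | M.Xz z ω = x ∧ M.Y x ω = y}

theorem measurable_Y (x : Fin 2) : Measurable (M.Y x) := by
  unfold Y
  by_cases hx : x = 0
  · simpa only [hx, ↓reduceIte] using M.hY0
  · simpa only [hx, ↓reduceIte] using M.hY1

theorem measurableSet_cell (z : Fin K) (x y : Fin 2) : MeasurableSet (M.cell z x y) :=
  (M.hXz z (measurableSet_singleton x)).inter (M.measurable_Y x (measurableSet_singleton y))

theorem measurableSet_Y_eq (x y : Fin 2) : MeasurableSet {ω | M.Y x ω = y} :=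
  M.measurable_Y x (measurableSet_singleton y)

theorem measureReal_cell {z : Fin K} (hz : π z ≠ 0) (x y : Fin 2) :
    M.P.real (M.cell z x y) = p z x y := by
  have hZz : M.P (M.Z ⁻¹' {z}) ≠ 0 := fun h => hz (by rw [← M.law_Z z, h, ENNReal.toReal_zero])
  rw [← M.law_cond z x y, cond_observed_eq M.indep M.hZ hZz]
  rfl

end Cells

theorem sum_cells_eq_one (M : IVModel K π p) (hπ : ∀ z, π z ≠ 0) (i j : Fin 2) (z : Fin K) :
    p z i j + p z i (1 - j) + p z (1 - i) 1 + p z (1 - i) 0 = 1 := by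
  have := sum_measureReal_eq_one_of_indicator (μ := M.P)
    (A := ![M.cell z i j, M.cell z i (1 - j), M.cell z (1 - i) 1, M.cell z (1 - i) 0])
    (fun k => by fin_cases k <;> exact M.measurableSet_cell ..) (fun ω => by
      simp only [Fin.sum_univ_succ, Fin.sum_univ_zero, Matrix.cons_val_zero, Matrix.cons_val_succ,
        indicator_apply, cell, Y, mem_ofPred_eq, Pi.one_apply]
      -- the indicators only depend on finitely many `Fin 2`-values, all checked by `decide`
      generalize M.Xz z ω = xz, M.Y0 ω = y₀, M.Y1 ω = y₁
      norm_cast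
      revert i j xz y₀ y₁
      decide)
  simp only [Fin.sum_univ_succ, Fin.sum_univ_zero, Matrix.cons_val_zero, Matrix.cons_val_succ,
    M.measureReal_cell (hπ z)] at this
  linarith

theorem p_le_measureReal_Y (M : IVModel K π p) (hπ : ∀ z, π z ≠ 0) (i j : Fin 2) (z : Fin K) :
    p z i j ≤ M.P.real {ω | M.Y i ω = j} := by
  have := sum_measureReal_le_of_indicator (μ := M.P) (A := ![M.cell z i j])
    (B := ![{ω | M.Y i ω = j}]) (C := 0) (fun k => by fin_cases k; exact M.measurableSet_cell ..)
    (fun k => by fin_cases k; exact M.measurableSet_Y_eq ..) (fun ω => by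
      simp only [Fin.sum_univ_succ, Fin.sum_univ_zero, Matrix.cons_val_zero, Matrix.cons_val_succ,
        indicator_apply, cell, Y, mem_ofPred_eq, Pi.one_apply]
      generalize M.Xz z ω = xz, M.Y0 ω = y₀, M.Y1 ω = y₁
      norm_cast
      revert i j xz y₀ y₁
      decide)
  simp only [Fin.sum_univ_succ, Fin.sum_univ_zero, Matrix.cons_val_zero, Matrix.cons_val_succ,
    M.measureReal_cell (hπ z)] at this
  linarith

theorem measureReal_Y_add_p_le_one (M : IVModel K π p) (hπ : ∀ z, π z ≠ 0) (i j : Fin 2)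
    (z : Fin K) : M.P.real {ω | M.Y i ω = j} + p z i (1 - j) ≤ 1 := by
  have := sum_measureReal_le_of_indicator (μ := M.P) (A := ![{ω | M.Y i ω = j}, M.cell z i (1 - j)])
    (B := ![]) (C := 1)
    (fun k => by fin_cases k; exacts [M.measurableSet_Y_eq .., M.measurableSet_cell ..])
    (fun k => k.elim0) (fun ω => by
      simp only [Fin.sum_univ_succ, Fin.sum_univ_zero, Matrix.cons_val_zero, Matrix.cons_val_succ,
        indicator_apply, cell, Y, mem_ofPred_eq, Pi.one_apply]
      generalize M.Xz z ω = xz, M.Y0 ω = y₀, M.Y1 ω = y₁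
      norm_cast
      revert i j xz y₀ y₁
      decide)
  simp only [Fin.sum_univ_succ, Fin.sum_univ_zero, Matrix.cons_val_zero, Matrix.cons_val_succ,
    M.measureReal_cell (hπ z)] at this
  linarith

theorem measureReal_Y_le (M : IVModel K π p) (hπ : ∀ z, π z ≠ 0) (i j : Fin 2) (z w : Fin K) :
    M.P.real {ω | M.Y i ω = j} ≤ p z i j + p z (1 - i) 0 + p w i j + p w (1 - i) 1 := by
  have := sum_measureReal_le_of_indicator (μ := M.P) (A := ![{ω | M.Y i ω = j}])
    (B := ![M.cell z i j, M.cell z (1 - i) 0, M.cell w i j, M.cell w (1 - i) 1]) (C := 0)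
    (fun k => by fin_cases k; exact M.measurableSet_Y_eq ..)
    (fun k => by fin_cases k <;> exact M.measurableSet_cell ..) (fun ω => by
      simp only [Fin.sum_univ_succ, Fin.sum_univ_zero, Matrix.cons_val_zero, Matrix.cons_val_succ,
        indicator_apply, cell, Y, mem_ofPred_eq, Pi.one_apply]
      generalize M.Xz z ω = xz, M.Xz w ω = xw, M.Y0 ω = y₀, M.Y1 ω = y₁
      norm_cast
      revert i j xz xw y₀ y₁
      decide)
  simp only [Fin.sum_univ_succ, Fin.sum_univ_zero, Matrix.cons_val_zero, Matrix.cons_val_succ,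
    M.measureReal_cell (hπ _)] at this
  linarith

theorem p_add_p_le_measureReal_Y_add (M : IVModel K π p) (hπ : ∀ z, π z ≠ 0) (i j : Fin 2)
    (z w : Fin K) :
    p z i j + p z (1 - i) 1 ≤ M.P.real {ω | M.Y i ω = j} + p w i (1 - j) + p w (1 - i) 1 := by
  have := sum_measureReal_le_of_indicator (μ := M.P) (A := ![M.cell z i j, M.cell z (1 - i) 1])
    (B := ![{ω | M.Y i ω = j}, M.cell w i (1 - j), M.cell w (1 - i) 1]) (C := 0)
    (fun k => by fin_cases k <;> exact M.measurableSet_cell ..)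
    (fun k => by fin_cases k; exacts [M.measurableSet_Y_eq .., M.measurableSet_cell ..,
      M.measurableSet_cell ..]) (fun ω => by
      simp only [Fin.sum_univ_succ, Fin.sum_univ_zero, Matrix.cons_val_zero, Matrix.cons_val_succ,
        indicator_apply, cell, Y, mem_ofPred_eq, Pi.one_apply]
      generalize M.Xz z ω = xz, M.Xz w ω = xw, M.Y0 ω = y₀, M.Y1 ω = y₁
      norm_cast
      revert i j xz xw y₀ y₁
      decide)
  simp only [Fin.sum_univ_succ, Fin.sum_univ_zero, Matrix.cons_val_zero, Matrix.cons_val_succ,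
    M.measureReal_cell (hπ _)] at this
  linarith

theorem p_add_p_le_one (M : IVModel K π p) (hπ : ∀ z, π z ≠ 0) (i : Fin 2) (z w : Fin K) :
    p z (1 - i) 1 + p w (1 - i) 0 ≤ 1 := by
  have := sum_measureReal_le_of_indicator (μ := M.P)
    (A := ![M.cell z (1 - i) 1, M.cell w (1 - i) 0])
    (B := ![]) (C := 1) (fun k => by fin_cases k <;> exact M.measurableSet_cell ..)
    (fun k => k.elim0) (fun ω => by
      simp only [Fin.sum_univ_succ, Fin.sum_univ_zero, Matrix.cons_val_zero, Matrix.cons_val_succ,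
        indicator_apply, cell, Y, mem_ofPred_eq, Pi.one_apply]
      generalize M.Xz z ω = xz, M.Xz w ω = xw, M.Y0 ω = y₀, M.Y1 ω = y₁
      norm_cast
      revert i xz xw y₀ y₁
      decide)
  simp only [Fin.sum_univ_succ, Fin.sum_univ_zero, Matrix.cons_val_zero, Matrix.cons_val_succ,
    M.measureReal_cell (hπ _)] at this
  linarith

theorem sum_five_cells_le_two (M : IVModel K π p) (hπ : ∀ z, π z ≠ 0) (i j : Fin 2)
    (z w v : Fin K) :
    p z i (1 - j) + p z (1 - i) 1 + p w i j + p w (1 - i) 1 + p v (1 - i) 0 ≤ 2 := by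
  have := sum_measureReal_le_of_indicator (μ := M.P)
    (A := ![M.cell z i (1 - j), M.cell z (1 - i) 1, M.cell w i j, M.cell w (1 - i) 1,
      M.cell v (1 - i) 0]) (B := ![]) (C := 2)
    (fun k => by fin_cases k <;> exact M.measurableSet_cell ..) (fun k => k.elim0) (fun ω => by
      simp only [Fin.sum_univ_succ, Fin.sum_univ_zero, Matrix.cons_val_zero, Matrix.cons_val_succ,
        indicator_apply, cell, Y, mem_ofPred_eq, Pi.one_apply]
      generalize M.Xz z ω = xz, M.Xz w ω = xw, M.Xz v ω = xv, M.Y0 ω = y₀, M.Y1 ω = y₁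
      norm_cast
      revert i j xz xw xv y₀ y₁
      decide)
  simp only [Fin.sum_univ_succ, Fin.sum_univ_zero, Matrix.cons_val_zero, Matrix.cons_val_succ,
    M.measureReal_cell (hπ _)] at this
  linarith

theorem p_le_sum_four_cells (M : IVModel K π p) (hπ : ∀ z, π z ≠ 0) (i j : Fin 2) (z w v : Fin K) :
    p z (1 - i) 1 ≤ p w i j + p w (1 - i) 1 + p v i (1 - j) + p v (1 - i) 1 := by
  have := sum_measureReal_le_of_indicator (μ := M.P) (A := ![M.cell z (1 - i) 1])
    (B := ![M.cell w i j, M.cell w (1 - i) 1, M.cell v i (1 - j), M.cell v (1 - i) 1]) (C := 0)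
    (fun k => by fin_cases k; exact M.measurableSet_cell ..)
    (fun k => by fin_cases k <;> exact M.measurableSet_cell ..) (fun ω => by
      simp only [Fin.sum_univ_succ, Fin.sum_univ_zero, Matrix.cons_val_zero, Matrix.cons_val_succ,
        indicator_apply, cell, Y, mem_ofPred_eq, Pi.one_apply]
      generalize M.Xz z ω = xz, M.Xz w ω = xw, M.Xz v ω = xv, M.Y0 ω = y₀, M.Y1 ω = y₁
      norm_cast
      revert i j xz xw xv y₀ y₁
      decide)
  simp only [Fin.sum_univ_succ, Fin.sum_univ_zero, Matrix.cons_val_zero, Matrix.cons_val_succ,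
    M.measureReal_cell (hπ _)] at this
  linarith

theorem exists_isLayout (M : IVModel K π p) (hK : 2 ≤ K) (hπ : ∀ z, π z ≠ 0) (i j : Fin 2) :
    ∃ s e : ℝ, ∃ q : Fin K → ℝ, ∀ z,
      IsLayout (p z i j) (p z i (1 - j)) (p z (1 - i) 1) (gOf hK p i j) s e (q z) := by
  have : Nonempty (Fin K) := ⟨⟨0, by omega⟩⟩
  obtain ⟨hg, hg₂⟩ := (le_gOf_iff hK p i j).1 le_rfl
  have hYg : M.P.real {ω | M.Y i ω = j} ≤ gOf hK p i j := (le_gOf_iff hK p i j).2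
    ⟨fun z => by linarith [M.measureReal_Y_add_p_le_one hπ i j z, M.sum_cells_eq_one hπ i j z],
      fun z w _ => M.measureReal_Y_le hπ i j z w⟩
  have hp : ∀ z x y, 0 ≤ p z x y := fun z x y => M.measureReal_cell (hπ z) x y ▸ measureReal_nonneg
  refine exists_isLayout_of_bounds (d := fun z => p z (1 - i) 0) (fun z => hp z i j)
    (fun z => hp z i (1 - j)) (fun z => hp z (1 - i) 1) (fun z => hp z (1 - i) 0)
    (M.sum_cells_eq_one hπ i j) (fun z => by linarith [hg z]) (fun z w => ?_)
    (fun z => (M.p_le_measureReal_Y hπ i j z).trans hYg)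
    (fun z w => by linarith [M.p_add_p_le_measureReal_Y_add hπ i j z w])
    (M.p_add_p_le_one hπ i) (M.sum_five_cells_le_two hπ i j) (M.p_le_sum_four_cells hπ i j)
  rcases eq_or_ne z w with rfl | hzw
  · linarith [hg z, hp z i j]
  · exact hg₂ z w hzw

end IVModel

theorem Measure.prod_preimage_snd {α β : Type*} [MeasurableSpace α] [MeasurableSpace β]
    (ν : Measure α) [IsProbabilityMeasure ν] (μ : Measure β) [SFinite μ] (t : Set β) :
    ν.prod μ (Prod.snd ⁻¹' t) = μ t := by
  rw [← univ_prod, Measure.prod_prod, measure_univ, one_mul]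

theorem measurable_responses {K : ℕ} {U : Type*} [MeasurableSpace U] {X : Fin K → U → Fin 2}
    {Y : Fin 2 → U → Fin 2} (hX : ∀ z, Measurable (X z)) (hY : ∀ x, Measurable (Y x)) :
    Measurable fun u => (Y 0 u, Y 1 u, fun z => X z u) :=
  (hY 0).prodMk ((hY 1).prodMk (measurable_pi_lambda _ hX))

namespace IVModel

section OfResponses

variable {K : ℕ} {π : Fin K → ℝ} {p : Fin K → Fin 2 → Fin 2 → ℝ}
  (ν : Measure (Fin K)) [IsProbabilityMeasure ν] (hν : ∀ z, ν.real {z} = π z)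
  (hπ : ∀ z, π z ≠ 0) {U : Type} [MeasurableSpace U] (μ : Measure U) [IsProbabilityMeasure μ]
  (X : Fin K → U → Fin 2) (Y : Fin 2 → U → Fin 2) (hX : ∀ z, Measurable (X z))
  (hY : ∀ x, Measurable (Y x)) (hcell : ∀ z x y, μ.real {u | X z u = x ∧ Y x u = y} = p z x y)

noncomputable def ofResponses : IVModel K π p where
  Ω := Fin K × U
  P := ν.prod μ
  prob := inferInstance
  Z := Prod.fst
  Xz z ω := X z ω.2
  Y0 ω := Y 0 ω.2
  Y1 ω := Y 1 ω.2
  hZ := measurable_fst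
  hXz z := (hX z).comp measurable_snd
  hY0 := (hY 0).comp measurable_snd
  hY1 := (hY 1).comp measurable_snd
  indep := indepFun_prod measurable_id (measurable_responses hX hY)
  law_Z z := by rw [← prod_univ, Measure.prod_prod, measure_univ, mul_one, ← measureReal_def, hν]
  law_cond z x y := by
    have hz : ν.prod μ (Prod.fst ⁻¹' {z}) ≠ 0 := by
      rw [← prod_univ, Measure.prod_prod, measure_univ, mul_one]
      exact fun h => hπ z (by rw [← hν z, measureReal_def, h, ENNReal.toReal_zero])
    have hind : IndepFun Prod.fst (fun ω : Fin K × U => (Y 0 ω.2, Y 1 ω.2, fun z => X z ω.2))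
        (ν.prod μ) := indepFun_prod measurable_id (measurable_responses hX hY)
    rw [cond_observed_eq hind measurable_fst hz, ← hcell z x y]
    simp only [Fin.ite_zero_apply Y]
    exact congrArg ENNReal.toReal (Measure.prod_preimage_snd ν μ {u | X z u = x ∧ Y x u = y})

theorem measureReal_ofResponses_Y (x y : Fin 2) :
    (ofResponses ν hν hπ μ X Y hX hY hcell).P.real
        {ω | (ofResponses ν hν hπ μ X Y hX hY hcell).Y x ω = y} = μ.real {u | Y x u = y} := by
  simp only [IVModel.Y, ofResponses, Fin.ite_zero_apply Y]
  exact congrArg ENNReal.toReal (Measure.prod_preimage_snd ν μ {u | Y x u = y})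

end OfResponses

end IVModel

section Layout

variable (i j : Fin 2)

noncomputable def layoutX (a b c q u : ℝ) : Fin 2 :=
  if u ∈ Ico (q - a) q ∪ Ico (q + c) (q + c + b) then i else 1 - i

noncomputable def layoutY (g s e : ℝ) (x : Fin 2) (u : ℝ) : Fin 2 :=
  if x = i then (if u < g then j else 1 - j) else if u ∈ Ico s e then 1 else 0

theorem measurable_layoutX (a b c q : ℝ) : Measurable (layoutX i a b c q) :=
  Measurable.ite (measurableSet_Ico.union measurableSet_Ico) measurable_const measurable_const

theorem measurable_layoutY (g s e : ℝ) (x : Fin 2) : Measurable (layoutY i j g s e x) := by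
  unfold layoutY
  by_cases hx : x = i
  · simp only [hx, ↓reduceIte]
    exact Measurable.ite measurableSet_Iio measurable_const measurable_const
  · simp only [hx, ↓reduceIte]
    exact Measurable.ite measurableSet_Ico measurable_const measurable_const

noncomputable def unitUniform : Measure ℝ := volume.restrict (Ico 0 1)

instance : IsProbabilityMeasure unitUniform := ⟨by simp [unitUniform]⟩

theorem unitUniform_real (t : Set ℝ) : unitUniform.real t = volume.real (t ∩ Ico 0 1) := by
  rw [measureReal_def, unitUniform, Measure.restrict_apply' measurableSet_Ico, ← measureReal_def]

variable {a b c g s e q : ℝ}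

theorem measureReal_layout_cells (h : IsLayout a b c g s e q) :
    unitUniform.real {u | layoutX i a b c q u = i ∧ layoutY i j g s e i u = j} = a ∧
    unitUniform.real {u | layoutX i a b c q u = i ∧ layoutY i j g s e i u = 1 - j} = b ∧
    unitUniform.real {u | layoutX i a b c q u = 1 - i ∧ layoutY i j g s e (1 - i) u = 1} = c ∧
    unitUniform.real {u | layoutX i a b c q u = 1 - i ∧ layoutY i j g s e (1 - i) u = 0} =
      1 - a - b - c := by
  obtain ⟨h₀, h₁, h₂, h₃, h₄, h₅, h₆, h₇⟩ := h
  simp only [unitUniform_real, layoutX, layoutY, ↓reduceIte, Fin.one_sub_ne_self,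
    (Fin.one_sub_ne_self _).symm, ite_eq_left_iff, ite_eq_right_iff, imp_false, not_not,
    zero_ne_one, one_ne_zero]
  refine ⟨?_, ?_, ?_, ?_⟩
  · rw [show {u | u ∈ Ico (q - a) q ∪ Ico (q + c) (q + c + b) ∧ u < g} ∩ Ico 0 1 =
        Ico (q - a) q by
      ext u; simp only [mem_inter_iff, mem_ofPred_eq, mem_union, mem_Ico]; grind,
      Real.volume_real_Ico_of_le (by linarith)]
    ring
  · rw [show {u | u ∈ Ico (q - a) q ∪ Ico (q + c) (q + c + b) ∧ ¬u < g} ∩ Ico 0 1 =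
        Ico (q + c) (q + c + b) by
      ext u; simp only [mem_inter_iff, mem_ofPred_eq, mem_union, mem_Ico, not_lt]; grind,
      Real.volume_real_Ico_of_le (by linarith)]
    ring
  · rw [show {u | u ∉ Ico (q - a) q ∪ Ico (q + c) (q + c + b) ∧ u ∈ Ico s e} ∩ Ico 0 1 =
        Ico q (q + c) by
      ext u; simp only [mem_inter_iff, mem_ofPred_eq, mem_union, mem_Ico, not_or, not_and, not_lt]
      grind,
      Real.volume_real_Ico_of_le (by linarith)]
    ring
  · rw [show {u | u ∉ Ico (q - a) q ∪ Ico (q + c) (q + c + b) ∧ u ∉ Ico s e} ∩ Ico 0 1 =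
        Ico 0 (q - a) ∪ Ico (q + c + b) 1 by
      ext u; simp only [mem_inter_iff, mem_ofPred_eq, mem_union, mem_Ico, not_or, not_and, not_lt]
      grind,
      measureReal_union (Ico_disjoint_Ico.2 ((min_le_left _ _).trans
        ((show q - a ≤ q + c + b by linarith).trans (le_max_right _ _)))) measurableSet_Ico
        measure_Ico_lt_top.ne measure_Ico_lt_top.ne,
      Real.volume_real_Ico_of_le h₀, Real.volume_real_Ico_of_le h₇]
    ring

theorem measureReal_layoutY (h : IsLayout a b c g s e q) :
    unitUniform.real {u | layoutY i j g s e i u = j} = g := by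
  obtain ⟨h₀, h₁, h₂, h₃, h₄, h₅, h₆, h₇⟩ := h
  simp only [unitUniform_real, layoutY, ↓reduceIte, Fin.one_sub_ne_self, ite_eq_left_iff,
    imp_false, not_not]
  rw [show {u | u < g} ∩ Ico 0 1 = Ico 0 g by
      ext u; simp only [mem_inter_iff, mem_ofPred_eq, mem_Ico]; grind,
    Real.volume_real_Ico_of_le (by linarith)]
  ring

end Layout

theorem IVModel.exists_measureReal_Y_eq {K : ℕ} [NeZero K] {π : Fin K → ℝ}
    {p : Fin K → Fin 2 → Fin 2 → ℝ} (M : IVModel K π p) (hπ : ∀ z, π z ≠ 0) {i j : Fin 2}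
    {g s e : ℝ} {q : Fin K → ℝ}
    (hq : ∀ z, IsLayout (p z i j) (p z i (1 - j)) (p z (1 - i) 1) g s e (q z)) :
    ∃ M' : IVModel K π p, M'.P.real {ω | M'.Y i ω = j} = g := by
  have hν : ∀ z, (M.P.map M.Z).real {z} = π z := fun z => by
    rw [measureReal_def, Measure.map_apply M.hZ (measurableSet_singleton z), M.law_Z]
  have := Measure.isProbabilityMeasure_map (μ := M.P) M.hZ.aemeasurable
  have hcell : ∀ z x y, unitUniform.real {u | layoutX i (p z i j) (p z i (1 - j)) (p z (1 - i) 1)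
      (q z) u = x ∧ layoutY i j g s e x u = y} = p z x y := by
    intro z x
    obtain ⟨ha, hb, hc, hd⟩ := measureReal_layout_cells i j (hq z)
    rcases Fin.eq_or_eq_one_sub x i with rfl | rfl
    · intro y
      rcases Fin.eq_or_eq_one_sub y j with rfl | rfl
      exacts [ha, hb]
    · refine Fin.forall_fin_two.2 ⟨?_, hc⟩
      linarith [M.sum_cells_eq_one hπ i j z]
  refine ⟨IVModel.ofResponses (M.P.map M.Z) hν hπ unitUniform _ _
    (fun z => measurable_layoutX i _ _ _ _) (measurable_layoutY i j g s e) hcell, ?_⟩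
  rw [IVModel.measureReal_ofResponses_Y]
  exact measureReal_layoutY i j (hq 0)

theorem stmt8 (K : ℕ) (hK : 2 ≤ K)
    (π : Fin K → ℝ) (hπpos : ∀ z, 0 < π z)
    (p : Fin K → Fin 2 → Fin 2 → ℝ)
    (hmodel : Nonempty (IVModel K π p)) :
    ∀ i j : Fin 2, ∃ M : IVModel K π p,
      (M.P {ω | (if i = 0 then M.Y0 ω else M.Y1 ω) = j}).toReal = gOf hK p i j := by
  intro i j
  obtain ⟨M⟩ := hmodel
  have hπ : ∀ z, π z ≠ 0 := fun z => (hπpos z).ne'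
  have : NeZero K := ⟨by omega⟩
  obtain ⟨s, e, q, hq⟩ := M.exists_isLayout hK hπ i j
  exact M.exists_measureReal_Y_eq hπ hq
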